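/- Let U be a finite set, T a left-continuous t-norm, I its residual implicator, N(x) = I(x,0) the induced negator, R a fuzzy relation on U, and A : U → [0,1] a fuzzy set that is granularly representable with respect to T and R. Then the fuzzy complement coA, defined by coA(u) = N(A(u)), is granularly representable with respect to T and the inverse relation R⁻¹, where R⁻¹(u,v) = R(v,u). -/

import Mathlib

open Set

/-- A t-norm on the unit interval (modeled as a real binary operation whose
relevant properties hold on `[0,1]`). -/
def IsTNorm (T : ℝ → ℝ → ℝ) : Prop :=
  (∀ x ∈ Icc (0:ℝ) 1, ∀ y ∈ Icc (0:ℝ) 1, T x y ∈ Icc (0:ℝ) 1) ∧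
  (∀ x y : ℝ, T x y = T y x) ∧
  (∀ x y z : ℝ, T (T x y) z = T x (T y z)) ∧
  (∀ x ∈ Icc (0:ℝ) 1, ∀ y ∈ Icc (0:ℝ) 1, ∀ z ∈ Icc (0:ℝ) 1, y ≤ z → T x y ≤ T x z) ∧
  (∀ x ∈ Icc (0:ℝ) 1, T x 1 = x)

/-- Left continuity of a t-norm (in each argument; by commutativity it suffices
to require it in the second argument). -/
def LeftContinuousTNorm (T : ℝ → ℝ → ℝ) : Prop :=
  ∀ x ∈ Icc (0:ℝ) 1, ∀ y ∈ Icc (0:ℝ) 1, ContinuousWithinAt (fun z => T x z) (Iic y) y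

/-- The residual implicator `I(x,y) = sup {λ ∈ [0,1] : T(x,λ) ≤ y}`. -/
noncomputable def resImp (T : ℝ → ℝ → ℝ) (x y : ℝ) : ℝ :=
  sSup {l : ℝ | l ∈ Icc (0:ℝ) 1 ∧ T x l ≤ y}

/-!
Since `T (R v u) (A u) ≤ A v`, associativity and monotonicity give
`T (A u) (T (R v u) (N (A v))) ≤ T (A v) (N (A v)) ≤ 0`, so `T (R v u) (N (A v))` is one of the
`λ` over which `N (A u) = I (A u, 0)` is the supremum. Left continuity is what makes the
supremum `N (A v)` itself satisfy `T (A v) (N (A v)) ≤ 0`.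
-/

namespace IsTNorm

variable {T : ℝ → ℝ → ℝ}

lemma comm (hT : IsTNorm T) (x y : ℝ) : T x y = T y x := hT.2.1 x y

lemma mono_left (hT : IsTNorm T) {x y z : ℝ} (hx : x ∈ Icc (0:ℝ) 1) (hy : y ∈ Icc (0:ℝ) 1)
    (hz : z ∈ Icc (0:ℝ) 1) (hyz : y ≤ z) : T y x ≤ T z x := by
  rw [hT.comm y, hT.comm z]
  exact hT.2.2.2.1 x hx y hy z hz hyz

lemma apply_zero_right (hT : IsTNorm T) {x : ℝ} (hx : x ∈ Icc (0:ℝ) 1) : T x 0 = 0 := by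
  have h01 : (0:ℝ) ∈ Icc (0:ℝ) 1 := ⟨le_rfl, zero_le_one⟩
  refine le_antisymm ?_ (hT.1 x hx 0 h01).1
  calc T x 0 ≤ T 1 0 := hT.mono_left h01 hx ⟨zero_le_one, le_rfl⟩ hx.2
    _ = 0 := by rw [hT.comm, hT.2.2.2.2 0 h01]

end IsTNorm

section resImp

variable {T : ℝ → ℝ → ℝ} {x y l : ℝ}

lemma le_resImp (hl : l ∈ Icc (0:ℝ) 1) (h : T x l ≤ y) : l ≤ resImp T x y :=
  le_csSup ⟨1, fun _ hm => hm.1.2⟩ ⟨hl, h⟩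

lemma resImp_set_nonempty (hT : IsTNorm T) (hx : x ∈ Icc (0:ℝ) 1) (hy : 0 ≤ y) :
    {l : ℝ | l ∈ Icc (0:ℝ) 1 ∧ T x l ≤ y}.Nonempty :=
  ⟨0, ⟨le_rfl, zero_le_one⟩, (hT.apply_zero_right hx).trans_le hy⟩

lemma resImp_mem_Icc (hT : IsTNorm T) (hx : x ∈ Icc (0:ℝ) 1) (hy : 0 ≤ y) :
    resImp T x y ∈ Icc (0:ℝ) 1 :=
  ⟨le_resImp ⟨le_rfl, zero_le_one⟩ ((hT.apply_zero_right hx).trans_le hy),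
    csSup_le (resImp_set_nonempty hT hx hy) fun _ hm => hm.1.2⟩

lemma IsTNorm.apply_resImp_le (hT : IsTNorm T) (hLC : LeftContinuousTNorm T)
    (hx : x ∈ Icc (0:ℝ) 1) (hy : 0 ≤ y) : T x (resImp T x y) ≤ y := by
  set S := {l : ℝ | l ∈ Icc (0:ℝ) 1 ∧ T x l ≤ y}
  have hne : S.Nonempty := resImp_set_nonempty hT hx hy
  have hbdd : BddAbove S := ⟨1, fun _ hm => hm.1.2⟩
  have hcont : ContinuousWithinAt (T x) S (sSup S) :=
    (hLC x hx _ (resImp_mem_Icc hT hx hy)).mono fun _ hm => le_csSup hbdd hm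
  have : (nhdsWithin (sSup S) S).NeBot :=
    mem_closure_iff_nhdsWithin_neBot.mp (csSup_mem_closure hne hbdd)
  exact le_of_tendsto hcont (Filter.eventually_of_mem self_mem_nhdsWithin fun _ hm => hm.2)

lemma IsTNorm.apply_resImp_le_resImp (hT : IsTNorm T) (hLC : LeftContinuousTNorm T)
    {r a b : ℝ} (hr : r ∈ Icc (0:ℝ) 1) (ha : a ∈ Icc (0:ℝ) 1) (hb : b ∈ Icc (0:ℝ) 1)
    (hrb : T r b ≤ a) (hy : 0 ≤ y) : T r (resImp T a y) ≤ resImp T b y := by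
  have hn := resImp_mem_Icc hT ha hy
  refine le_resImp (hT.1 r hr _ hn) ?_
  calc T b (T r (resImp T a y)) = T (T r b) (resImp T a y) := by
        rw [← hT.2.2.1, hT.comm b r]
    _ ≤ T a (resImp T a y) := hT.mono_left hn (hT.1 r hr b hb) ha hrb
    _ ≤ y := hT.apply_resImp_le hLC ha hy

end resImp

theorem complement_granular_representable_general
    (U : Type*)
    (T : ℝ → ℝ → ℝ) (hT : IsTNorm T) (hLC : LeftContinuousTNorm T)
    (R : U → U → ℝ) (hR : ∀ u v, R u v ∈ Icc (0:ℝ) 1)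
    (A : U → ℝ) (hA : ∀ u, A u ∈ Icc (0:ℝ) 1)
    (hGran : ∀ u v, T (R u v) (A v) ≤ A u) :
    -- `coA` is granularly representable w.r.t. the inverse relation `R⁻¹(u,v) = R(v,u)`:
    ∀ u v : U, T (R v u) (resImp T (A v) 0) ≤ resImp T (A u) 0 :=
  fun u v => hT.apply_resImp_le_resImp hLC (hR v u) (hA v) (hA u) (hGran v u) le_rfl

theorem complement_granular_representable
    (U : Type*) [Fintype U]
    (T : ℝ → ℝ → ℝ) (hT : IsTNorm T) (hLC : LeftContinuousTNorm T)
    (R : U → U → ℝ) (hR : ∀ u v, R u v ∈ Icc (0:ℝ) 1)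
    (A : U → ℝ) (hA : ∀ u, A u ∈ Icc (0:ℝ) 1)
    (hGran : ∀ u v, T (R u v) (A v) ≤ A u) :
    -- `coA` is granularly representable w.r.t. the inverse relation `R⁻¹(u,v) = R(v,u)`:
    ∀ u v : U, T (R v u) (resImp T (A v) 0) ≤ resImp T (A u) 0 :=
  complement_granular_representable_general U T hT hLC R hR A hA hGran
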